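/- arXiv:2403.06334 — 3 statements merged into one kernel-verified Lean document; each statement's English description precedes it below -/
import Mathlib

section
/- The logic L = S4.1 ∗ S4 + ◇₁□₂(◇₁p → □₁p) is Kripke complete: L equals the set of bimodal formulas valid in every Kripke 2-frame validating L; equivalently, for every bimodal formula A ∉ L there is a Kripke 2-frame F with F ⊨ L and F ⊭ A. -/
/- ============== Formulas ============== -/

/-- Unimodal formulas. -/
inductive MForm : Type
  | var : ℕ → MForm
  | bot : MForm
  | imp : MForm → MForm → MForm
  | box : MForm → MForm

namespace MForm
def neg (A : MForm) : MForm := A.imp .bot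
def dia (A : MForm) : MForm := (MForm.box A.neg).neg
def subst (σ : ℕ → MForm) : MForm → MForm
  | var n => σ n
  | bot => bot
  | imp A B => (subst σ A).imp (subst σ B)
  | box A => MForm.box (subst σ A)
end MForm

/-- Bimodal formulas (`box 0` is □₁ and `box 1` is □₂). -/
inductive BForm : Type
  | var : ℕ → BForm
  | bot : BForm
  | imp : BForm → BForm → BForm
  | box : Fin 2 → BForm → BForm

namespace BForm
def neg (A : BForm) : BForm := A.imp .bot
def dia (i : Fin 2) (A : BForm) : BForm := (BForm.box i A.neg).neg
def subst (σ : ℕ → BForm) : BForm → BForm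
  | var n => σ n
  | bot => bot
  | imp A B => (subst σ A).imp (subst σ B)
  | box i A => BForm.box i (subst σ A)
end BForm

/-- Translation of a unimodal formula into the bimodal language,
reading □ as □ᵢ. -/
def MForm.toB (i : Fin 2) : MForm → BForm
  | .var n => .var n
  | .bot => .bot
  | .imp A B => (MForm.toB i A).imp (MForm.toB i B)
  | .box A => BForm.box i (MForm.toB i A)

/- ============== Normal modal logics ============== -/

/-- Provability in the smallest normal unimodal logic containing the axioms `Ax`:
classical tautologies (via a Hilbert axiomatization), the normality axiom,
modus ponens, necessitation and uniform substitution. -/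
inductive MProv (Ax : Set MForm) : MForm → Prop
  | axm {A : MForm} : A ∈ Ax → MProv Ax A
  | pl1 {A B : MForm} : MProv Ax (A.imp (B.imp A))
  | pl2 {A B C : MForm} : MProv Ax ((A.imp (B.imp C)).imp ((A.imp B).imp (A.imp C)))
  | pl3 {A : MForm} : MProv Ax ((A.neg.neg).imp A)
  | kax {A B : MForm} : MProv Ax ((MForm.box (A.imp B)).imp ((MForm.box A).imp (MForm.box B)))
  | mp {A B : MForm} : MProv Ax (A.imp B) → MProv Ax A → MProv Ax B
  | nec {A : MForm} : MProv Ax A → MProv Ax (MForm.box A)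
  | subst {A : MForm} (σ : ℕ → MForm) : MProv Ax A → MProv Ax (A.subst σ)

/-- Provability in the smallest normal bimodal logic containing the axioms `Ax`. -/
inductive BProv (Ax : Set BForm) : BForm → Prop
  | axm {A : BForm} : A ∈ Ax → BProv Ax A
  | pl1 {A B : BForm} : BProv Ax (A.imp (B.imp A))
  | pl2 {A B C : BForm} : BProv Ax ((A.imp (B.imp C)).imp ((A.imp B).imp (A.imp C)))
  | pl3 {A : BForm} : BProv Ax ((A.neg.neg).imp A)
  | kax (i : Fin 2) {A B : BForm} :
      BProv Ax ((BForm.box i (A.imp B)).imp ((BForm.box i A).imp (BForm.box i B)))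
  | mp {A B : BForm} : BProv Ax (A.imp B) → BProv Ax A → BProv Ax B
  | nec (i : Fin 2) {A : BForm} : BProv Ax A → BProv Ax (BForm.box i A)
  | subst {A : BForm} (σ : ℕ → BForm) : BProv Ax A → BProv Ax (A.subst σ)

/-- The propositional letter p. -/
def pM : MForm := .var 0

/-- Axioms of S4 : □p→p and □p→□□p. -/
def S4Ax : Set MForm := {(MForm.box pM).imp pM, (MForm.box pM).imp (MForm.box (MForm.box pM))}

/-- The McKinsey axiom □◇p→◇□p. -/
def McKM : MForm := (MForm.box pM.dia).imp (MForm.box pM).dia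

/-- The logic S4. -/
def S4L : Set MForm := {A | MProv S4Ax A}

/-- The logic S4.1 = S4 + McKinsey. -/
def S41L : Set MForm := {A | MProv (S4Ax ∪ {McKM}) A}

/-- Axioms of the fusion S4.1 ∗ S4 : all theorems of S4.1 read with □₁ together
with all theorems of S4 read with □₂. -/
def FusionAx : Set BForm := (MForm.toB 0 '' S41L) ∪ (MForm.toB 1 '' S4L)

/-- The fusion S4.1 ∗ S4 (as a normal bimodal logic). -/
def FusionL : Set BForm := {A | BProv FusionAx A}

def pB : BForm := .var 0

/-- The formula ◇₁□₂(◇₁p → □₁p). -/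
def MKB : BForm := BForm.dia 0 (BForm.box 1 ((BForm.dia 0 pB).imp (BForm.box 0 pB)))

/-- The logic L = S4.1 ∗ S4 + ◇₁□₂(◇₁p → □₁p). -/
def LL : Set BForm := {A | BProv (FusionAx ∪ {MKB}) A}

/- ============== Kripke semantics ============== -/

/-- Truth of a bimodal formula at a point of a Kripke 2-frame `(W, R 0, R 1)`
under valuation `V`. -/
def BSat {W : Type} (R : Fin 2 → W → W → Prop) (V : ℕ → W → Prop) : W → BForm → Prop
  | x, .var n => V n x
  | _, .bot => False
  | x, .imp A B => BSat R V x A → BSat R V x B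
  | x, .box i A => ∀ y, R i x y → BSat R V y A

/-- Frame validity for bimodal formulas. -/
def BValid {W : Type} (R : Fin 2 → W → W → Prop) (A : BForm) : Prop :=
  ∀ (V : ℕ → W → Prop) (x : W), BSat R V x A

/-- Truth of a unimodal formula at a point of a Kripke frame. -/
def MKSat {W : Type} (R : W → W → Prop) (V : ℕ → W → Prop) : W → MForm → Prop
  | x, .var n => V n x
  | _, .bot => False
  | x, .imp A B => MKSat R V x A → MKSat R V x B
  | x, .box A => ∀ y, R x y → MKSat R V y A

/-- Frame validity for unimodal formulas. -/
def MKValid {W : Type} (R : W → W → Prop) (A : MForm) : Prop :=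
  ∀ (V : ℕ → W → Prop) (x : W), MKSat R V x A

/- ============== Topological semantics ============== -/

/-- Topological truth of a unimodal formula: □A holds at `x` iff some open
neighbourhood of `x` satisfies `A` everywhere. -/
def MTSat {X : Type} (t : TopologicalSpace X) (V : ℕ → X → Prop) : X → MForm → Prop
  | x, .var n => V n x
  | _, .bot => False
  | x, .imp A B => MTSat t V x A → MTSat t V x B
  | x, .box A => ∃ U : Set X, t.IsOpen U ∧ x ∈ U ∧ ∀ y ∈ U, MTSat t V y A

/-- Topological validity for unimodal formulas. -/
def MTValid {X : Type} (t : TopologicalSpace X) (A : MForm) : Prop :=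
  ∀ (V : ℕ → X → Prop) (x : X), MTSat t V x A

/-- Bitopological truth of a bimodal formula: □ᵢ is interpreted via the
topology `t i`. -/
def BTSat {X : Type} (t : Fin 2 → TopologicalSpace X) (V : ℕ → X → Prop) : X → BForm → Prop
  | x, .var n => V n x
  | _, .bot => False
  | x, .imp A B => BTSat t V x A → BTSat t V x B
  | x, .box i A => ∃ U : Set X, (t i).IsOpen U ∧ x ∈ U ∧ ∀ y ∈ U, BTSat t V y A

/-- Bitopological validity for bimodal formulas. -/
def BTValid {X : Type} (t : Fin 2 → TopologicalSpace X) (A : BForm) : Prop :=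
  ∀ (V : ℕ → X → Prop) (x : X), BTSat t V x A

/-- The horizontal topology on `X × Y`: generated by the base
`{U × {y} : U open in X, y ∈ Y}`. -/
def horiz {X Y : Type} (t : TopologicalSpace X) : TopologicalSpace (X × Y) :=
  TopologicalSpace.generateFrom
    {S | ∃ (U : Set X) (y : Y), t.IsOpen U ∧ S = U ×ˢ ({y} : Set Y)}

/-- The vertical topology on `X × Y`: generated by the base
`{{x} × U : x ∈ X, U open in Y}`. -/
def vert {X Y : Type} (t : TopologicalSpace Y) : TopologicalSpace (X × Y) :=
  TopologicalSpace.generateFrom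
    {S | ∃ (x : X) (U : Set Y), t.IsOpen U ∧ S = ({x} : Set X) ×ˢ U}

/-- The topological product `L₁ ×ₜ L₂` of two unimodal logics: the set of all
bimodal formulas valid in every bitopological product `𝔛₁ × 𝔛₂` of (nonempty)
topological spaces with `𝔛₁ ⊨ L₁` and `𝔛₂ ⊨ L₂`. -/
def TopProdLogic (L1 L2 : Set MForm) : Set BForm :=
  {A | ∀ (X Y : Type) (t1 : TopologicalSpace X) (t2 : TopologicalSpace Y),
      Nonempty X → Nonempty Y →
      (∀ B ∈ L1, MTValid t1 B) → (∀ B ∈ L2, MTValid t2 B) →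
      BTValid ![horiz t1, vert t2] A}

/-- The Alexandrov topology of a (reflexive transitive) relation `R`:
the topology with base `{R(x) : x ∈ W}`. -/
def alexandrov {W : Type} (R : W → W → Prop) : TopologicalSpace W :=
  TopologicalSpace.generateFrom {S | ∃ x, S = {t | R x t}}

/-- A space is weakly scattered if every nonempty open set contains an
isolated point. -/
def WeaklyScattered {X : Type} (t : TopologicalSpace X) : Prop :=
  ∀ U : Set X, t.IsOpen U → U.Nonempty → ∃ x ∈ U, t.IsOpen ({x} : Set X)

/-- p-morphism between Kripke 1-frames. -/
def IsPMorphism {W U : Type} (R : W → W → Prop) (S : U → U → Prop) (f : W → U) : Prop :=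
  Function.Surjective f ∧ (∀ x y, R x y → S (f x) (f y)) ∧
    (∀ x u, S (f x) u → ∃ y, R x y ∧ f y = u)

/-- p-morphism between Kripke 2-frames. -/
def IsPMorphism2 {W U : Type} (R1 R2 : W → W → Prop) (S1 S2 : U → U → Prop)
    (f : W → U) : Prop :=
  Function.Surjective f ∧
    (∀ x y, R1 x y → S1 (f x) (f y)) ∧ (∀ x u, S1 (f x) u → ∃ y, R1 x y ∧ f y = u) ∧
    (∀ x y, R2 x y → S2 (f x) (f y)) ∧ (∀ x u, S2 (f x) u → ∃ y, R2 x y ∧ f y = u)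

/- ============== The frames 𝕋₂,₂ and 𝕋₂,₂₊₂ ============== -/

/-- The four-letter alphabet {a₁,a₂,b₁,b₂}: `(false, i)` is the a-letter `aᵢ₊₁`
and `(true, i)` is the b-letter `bᵢ₊₁`. -/
abbrev Letter : Type := Bool × Fin 2

/-- `T₂,₂ = {a₁,a₂,b₁,b₂}*`. -/
abbrev T22 : Type := List Letter

/-- `T₂ = {1,2}*`. -/
abbrev T2W : Type := List (Fin 2)

/-- First relation of `𝕋₂,₂`: append a word over the a-letters. -/
def R1T (w w' : T22) : Prop := ∃ c : T22, (∀ l ∈ c, l.1 = false) ∧ w' = w ++ c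

/-- Second relation of `𝕋₂,₂`: append a word over the b-letters. -/
def R2T (w w' : T22) : Prop := ∃ d : T22, (∀ l ∈ d, l.1 = true) ∧ w' = w ++ d

/-- The carrier of `𝕋₂,₂₊₂` : `⟨a, root⟩` is encoded as `(a, none)` and
`⟨a, b⟩` with `b ∈ T₂` as `(a, some b)`. -/
abbrev W222 : Type := T22 × Option T2W

/-- Generators of `R₁′`. -/
def R1'gen : W222 → W222 → Prop := fun x y =>
  (∃ a a', R1T a a' ∧ x = (a, none) ∧ y = (a', none)) ∨
  (∃ a, x = (a, none) ∧ y = (a, some ([] : T2W)))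

/-- `R₁′`: smallest reflexive transitive relation containing the generators. -/
def R1' : W222 → W222 → Prop := Relation.ReflTransGen R1'gen

/-- Generators of `R₂′`. -/
def R2'gen : W222 → W222 → Prop := fun x y =>
  (∃ a a', R2T a a' ∧ x = (a, none) ∧ y = (a', none)) ∨
  (∃ a b b', b <+: b' ∧ x = (a, some b) ∧ y = (a, some b'))

/-- `R₂′`: smallest reflexive transitive relation containing the generators. -/
def R2' : W222 → W222 → Prop := Relation.ReflTransGen R2'gen

/- ============== Pseudo-infinite paths and the spaces 𝒴 and 𝔛 ============== -/

/-- Infinite sequences over {0,1,2}: `none` encodes 0 and `some i` encodes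
`i+1 ∈ {1,2}`. -/
abbrev Seq3 : Type := ℕ → Option (Fin 2)

/-- `W_ω`: pseudo-infinite paths, i.e. sequences with finitely many nonzero
entries. -/
def Wom : Type := {s : Seq3 // {k | s k ≠ none}.Finite}

/-- `st(s)`: the least `N` such that all entries from `N` on are zero. -/
noncomputable def stN {γ : Type} (s : ℕ → Option γ) : ℕ :=
  sInf {N | ∀ k, N ≤ k → s k = none}

/-- The first `k` entries of a sequence, as a finite word. -/
def takeSeq {γ : Type} (s : ℕ → Option γ) (k : ℕ) : List (Option γ) :=
  List.ofFn (fun i : Fin k => s i.1)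

/-- `f_F`: delete all zeros from a finite word. -/
def fF {γ : Type} (l : List (Option γ)) : List γ := l.filterMap id

/-- `f_ω`: delete the zeros from a pseudo-infinite path, producing a finite word. -/
noncomputable def squash {γ : Type} (s : ℕ → Option γ) : List γ := fF (takeSeq s (stN s))

/-- The basic set `U_k(α) = {β ∈ W_ω : α↾k = β↾k and f_F(α↾k) ⊑ f_ω(β)}`. -/
def Uset (α : Wom) (k : ℕ) : Set Wom :=
  {β | takeSeq β.1 k = takeSeq α.1 k ∧ fF (takeSeq α.1 k) <+: squash β.1}

/-- The topology `T_ω` on `W_ω` generated by the base `{U_k(α) : k > 0}`;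
`𝒴 = (W_ω, T_ω)`. -/
def Tom : TopologicalSpace Wom :=
  TopologicalSpace.generateFrom {S | ∃ α k, 0 < k ∧ S = Uset α k}

/-- The basic sets of the space `𝔛`:
`U′_k(α,0) = (U_k(α) × {0}) ∪ (U_k(α) × {n ≥ k})` and `U′_k(α,n) = {⟨α,n⟩}`
for `n ≥ 1`. -/
def U'set (α : Wom) (k n : ℕ) : Set (Wom × ℕ) :=
  if n = 0 then (Uset α k ×ˢ ({0} : Set ℕ)) ∪ (Uset α k ×ˢ {m : ℕ | k ≤ m})
  else {(α, n)}

/-- The topology of the space `𝔛 = (W_ω × ℕ, T)`. -/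
def TX : TopologicalSpace (Wom × ℕ) :=
  TopologicalSpace.generateFrom {S | ∃ α k n, S = U'set α k n}

/-- Interleaving of two paths: the sequence `a_{x₁} b_{y₁} a_{x₂} b_{y₂} …`
(with `a₀ = b₀ = 0`). -/
def interleave (α β : Seq3) : ℕ → Option Letter := fun n =>
  if n % 2 = 0 then (α (n / 2)).map (fun v => ((false, v) : Letter))
  else (β (n / 2)).map (fun v => ((true, v) : Letter))

/-- The map `g : W_ω × W_ω → T₂,₂` obtained by interleaving and deleting zeros. -/
noncomputable def gmap (α β : Seq3) : T22 := squash (interleave α β)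

/-- `g` as a map on pairs. -/
noncomputable def gPair : Wom × Wom → T22 := fun q => gmap q.1.1 q.2.1

/-- `s↾n · 0^ω`. -/
def truncSeq (s : Seq3) (n : ℕ) : Seq3 := fun k => if k < n then s k else none

/-- The tail `γ` of `s = s↾n · γ`. -/
def shiftSeq (s : Seq3) (n : ℕ) : Seq3 := fun k => s (n + k)

/-- The map `f : 𝔛 × 𝒴 → 𝕋₂,₂₊₂` :
`f(⟨α,0⟩,β) = ⟨g(α,β), root⟩` and for `n ≥ 1`,
`f(⟨α,n⟩,β) = ⟨g(α↾n·0^ω, β↾n·0^ω), f_ω(γ)⟩` where `β = β↾n·γ`. -/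
noncomputable def fXY : (Wom × ℕ) × Wom → W222 := fun q =>
  if q.1.2 = 0 then (gmap q.1.1.1 q.2.1, none)
  else (gmap (truncSeq q.1.1.1 q.1.2) (truncSeq q.2.1 q.1.2),
        some (squash (shiftSeq q.2.1 q.1.2)))

/-- An effective encoding of bimodal formulas by natural numbers. -/
def encodeB : BForm → ℕ
  | .var n => Nat.pair 0 n
  | .bot => Nat.pair 1 0
  | .imp A B => Nat.pair 2 (Nat.pair (encodeB A) (encodeB B))
  | .box i A => Nat.pair 3 (Nat.pair i.1 (encodeB A))

/-! Soundness holds on the frames in which `R₁` and `R₂` are preorders and every point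
`R₁`-sees a point all of whose `R₂`-successors are `R₁`-endpoints. Completeness is by surgery on
the canonical model of L: glue to it a copy in which `R₁` is the identity, so that `C` holds at
the copy of `y` iff `C` with every `□₁` erased belongs to `y`, and let a canonical `x` also
`R₁`-see the copy of every `y` containing the erasures of all `C` with `□₁C ∈ x`. Such `y` exist
by compactness: McKinsey and `◇₁□₂(◇₁p → □₁p)` give, for finitely many `D`, an `R₁`-successor
of `x` at which `◇₁D → □₁D` holds throughout the `R₂`-cone, and there every formula whose
subformulas are among these `D` is equivalent to its erasure. -/

open BForm Set

theorem mkSat_subst {W : Type} (R : W → W → Prop) (V : ℕ → W → Prop) (σ : ℕ → MForm)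
    (A : MForm) (x : W) :
    MKSat R V x (A.subst σ) ↔ MKSat R (fun n y => MKSat R V y (σ n)) x A := by
  induction A generalizing x with
  | var n => rfl
  | bot => rfl
  | imp A B ihA ihB => exact imp_congr (ihA x) (ihB x)
  | box A ih => exact forall_congr' fun y => imp_congr Iff.rfl (ih y)

theorem bSat_subst {W : Type} (R : Fin 2 → W → W → Prop) (V : ℕ → W → Prop) (σ : ℕ → BForm)
    (A : BForm) (x : W) :
    BSat R V x (A.subst σ) ↔ BSat R (fun n y => BSat R V y (σ n)) x A := by
  induction A generalizing x with
  | var n => rfl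
  | bot => rfl
  | imp A B ihA ihB => exact imp_congr (ihA x) (ihB x)
  | box i A ih => exact forall_congr' fun y => imp_congr Iff.rfl (ih y)

theorem bSat_toB {W : Type} (R : Fin 2 → W → W → Prop) (V : ℕ → W → Prop) (i : Fin 2)
    (B : MForm) (x : W) : BSat R V x (MForm.toB i B) ↔ MKSat (R i) V x B := by
  induction B generalizing x with
  | var n => rfl
  | bot => rfl
  | imp A B ihA ihB => exact imp_congr (ihA x) (ihB x)
  | box A ih => exact forall_congr' fun y => imp_congr Iff.rfl (ih y)

theorem MProv.mkValid {Ax : Set MForm} {W : Type} {R : W → W → Prop}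
    (hAx : ∀ A ∈ Ax, MKValid R A) {A : MForm} (h : MProv Ax A) : MKValid R A := by
  induction h with
  | axm hA => exact hAx _ hA
  | pl1 => intro V x h _; exact h
  | pl2 => intro V x h1 h2 h3; exact h1 h3 (h2 h3)
  | pl3 => intro V x h; by_contra h'; exact h h'
  | kax => intro V x h1 h2 y hxy; exact h1 y hxy (h2 y hxy)
  | mp _ _ ih1 ih2 => intro V x; exact ih1 V x (ih2 V x)
  | nec _ ih => intro V x y _; exact ih V y
  | subst σ _ ih => intro V x; exact (mkSat_subst R V σ _ x).2 (ih _ x)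

theorem BProv.bValid {Ax : Set BForm} {W : Type} {R : Fin 2 → W → W → Prop}
    (hAx : ∀ A ∈ Ax, BValid R A) {A : BForm} (h : BProv Ax A) : BValid R A := by
  induction h with
  | axm hA => exact hAx _ hA
  | pl1 => intro V x h _; exact h
  | pl2 => intro V x h1 h2 h3; exact h1 h3 (h2 h3)
  | pl3 => intro V x h; by_contra h'; exact h h'
  | kax i => intro V x h1 h2 y hxy; exact h1 y hxy (h2 y hxy)
  | mp _ _ ih1 ih2 => intro V x; exact ih1 V x (ih2 V x)
  | nec i _ ih => intro V x y _; exact ih V y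
  | subst σ _ ih => intro V x; exact (bSat_subst R V σ _ x).2 (ih _ x)

theorem mkValid_of_mem_S4Ax {W : Type} {R : W → W → Prop} (hrefl : ∀ x, R x x)
    (htrans : ∀ x y z, R x y → R y z → R x z) : ∀ A ∈ S4Ax, MKValid R A := by
  rintro _ (rfl | rfl)
  · intro V x h
    exact h x (hrefl x)
  · intro V x h y hxy z hyz
    exact h z (htrans _ _ _ hxy hyz)

theorem mkValid_McKM {W : Type} {R : W → W → Prop}
    (hfinal : ∀ x, ∃ y, R x y ∧ ∀ z, R y z → z = y) : MKValid R McKM := by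
  intro V x hbox hnot
  obtain ⟨y, hxy, hy⟩ := hfinal x
  refine hnot y hxy fun z hyz => ?_
  rw [hy z hyz]
  by_contra hVy
  exact hbox y hxy fun z hyz hVz => hVy (hy z hyz ▸ hVz)

structure IsLFrame {W : Type} (R : Fin 2 → W → W → Prop) : Prop where
  refl : ∀ i x, R i x x
  trans : ∀ i x y z, R i x y → R i y z → R i x z
  collapse : ∀ x, ∃ y, R 0 x y ∧ ∀ z, R 1 y z → ∀ u, R 0 z u → u = z

namespace IsLFrame

variable {W : Type} {R : Fin 2 → W → W → Prop}

theorem bValid_MKB (hR : IsLFrame R) : BValid R MKB := by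
  intro V x hnot
  obtain ⟨y, hxy, hy⟩ := hR.collapse x
  refine hnot y hxy fun z hyz hdia u hzu => ?_
  rw [hy z hyz u hzu]
  by_contra hVz
  exact hdia fun w hzw hVw => hVz (hy z hyz w hzw ▸ hVw)

theorem mkValid_of_mem_S41L (hR : IsLFrame R) {A : MForm} (hA : A ∈ S41L) : MKValid (R 0) A := by
  refine MProv.mkValid ?_ hA
  rintro _ (hA | rfl)
  · exact mkValid_of_mem_S4Ax (hR.refl 0) (hR.trans 0) _ hA
  · refine mkValid_McKM fun x => ?_
    obtain ⟨y, hxy, hy⟩ := hR.collapse x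
    exact ⟨y, hxy, hy y (hR.refl 1 y)⟩

theorem bValid_of_mem_LL (hR : IsLFrame R) {A : BForm} (hA : A ∈ LL) : BValid R A := by
  refine BProv.bValid ?_ hA
  rintro _ ((⟨B, hB, rfl⟩ | ⟨B, hB, rfl⟩) | rfl)
  · exact fun V x => (bSat_toB R V 0 B x).2 (hR.mkValid_of_mem_S41L hB V x)
  · exact fun V x => (bSat_toB R V 1 B x).2
      (MProv.mkValid (mkValid_of_mem_S4Ax (hR.refl 1) (hR.trans 1)) hB V x)
  · exact hR.bValid_MKB

end IsLFrame

theorem BProv.imp_self {Ax : Set BForm} (A : BForm) : BProv Ax (A.imp A) :=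
  BProv.mp (BProv.mp BProv.pl2 (BProv.pl1 (B := A.imp A))) BProv.pl1

inductive Deriv (Ax Γ : Set BForm) : BForm → Prop
  | hyp {A : BForm} : A ∈ Γ → Deriv Ax Γ A
  | thm {A : BForm} : BProv Ax A → Deriv Ax Γ A
  | mp {A B : BForm} : Deriv Ax Γ (A.imp B) → Deriv Ax Γ A → Deriv Ax Γ B

namespace Deriv

variable {Ax Γ Δ : Set BForm} {A B : BForm}

theorem mono (h : Deriv Ax Γ A) (hΓ : Γ ⊆ Δ) : Deriv Ax Δ A := by
  induction h with
  | hyp hA => exact hyp (hΓ hA)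
  | thm hA => exact thm hA
  | mp _ _ ih1 ih2 => exact mp ih1 ih2

theorem dne (h : Deriv Ax Γ A.neg.neg) : Deriv Ax Γ A :=
  mp (thm BProv.pl3) h

theorem of_bot (h : Deriv Ax Γ .bot) : Deriv Ax Γ A :=
  dne (mp (thm BProv.pl1) h)

theorem deduction (h : Deriv Ax (insert A Γ) B) : Deriv Ax Γ (A.imp B) := by
  induction h with
  | hyp hB =>
    rcases hB with rfl | hB
    · exact thm (BProv.imp_self _)
    · exact mp (thm BProv.pl1) (hyp hB)
  | thm hB => exact mp (thm BProv.pl1) (thm hB)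
  | mp _ _ ih1 ih2 => exact mp (mp (thm BProv.pl2) ih1) ih2

theorem exists_finite (h : Deriv Ax Γ A) : ∃ s ⊆ Γ, s.Finite ∧ Deriv Ax s A := by
  induction h with
  | @hyp A hA => exact ⟨{A}, singleton_subset_iff.2 hA, finite_singleton A, hyp rfl⟩
  | thm hA => exact ⟨∅, empty_subset Γ, finite_empty, thm hA⟩
  | mp _ _ ih1 ih2 =>
    obtain ⟨s, hs, hsf, h1⟩ := ih1
    obtain ⟨t, ht, htf, h2⟩ := ih2
    exact ⟨s ∪ t, union_subset hs ht, hsf.union htf,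
      mp (h1.mono subset_union_left) (h2.mono subset_union_right)⟩

theorem box (i : Fin 2) (h : Deriv Ax Γ A) : Deriv Ax (BForm.box i '' Γ) (BForm.box i A) := by
  induction h with
  | hyp hA => exact hyp (mem_image_of_mem _ hA)
  | thm hA => exact thm (BProv.nec i hA)
  | mp _ _ ih1 ih2 => exact mp (mp (thm (BProv.kax i)) ih1) ih2

theorem bProv_of_empty (h : Deriv Ax ∅ A) : BProv Ax A := by
  induction h with
  | hyp hA => exact absurd hA (notMem_empty _)
  | thm hA => exact hA
  | mp _ _ ih1 ih2 => exact BProv.mp ih1 ih2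

end Deriv

def Consistent (Ax Γ : Set BForm) : Prop := ¬ Deriv Ax Γ .bot

theorem isOfFiniteCharacter_consistent (Ax : Set BForm) :
    Order.IsOfFiniteCharacter {Γ | Consistent Ax Γ} := by
  refine fun Γ => ⟨fun hΓ s hs _ hder => hΓ (hder.mono hs), fun h hder => ?_⟩
  obtain ⟨s, hs, hsf, hder⟩ := hder.exists_finite
  exact h s hs hsf hder

def MCS (Ax : Set BForm) : Type := {x : Set BForm // Maximal (Consistent Ax) x}

namespace MCS

variable {Ax Γ : Set BForm} {A B : BForm} {i : Fin 2}

theorem exists_superset (h : Consistent Ax Γ) : ∃ x : MCS Ax, Γ ⊆ x.1 := by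
  obtain ⟨m, hΓm, hm⟩ := (isOfFiniteCharacter_consistent Ax).exists_maximal h
  exact ⟨⟨m, hm⟩, hΓm⟩

variable (x : MCS Ax)

theorem deriv_bot_insert (hA : A ∉ x.1) : Deriv Ax (insert A x.1) .bot := by
  by_contra hcon
  exact hA (x.2.mem_of_prop_insert hcon)

theorem mem_of_deriv (h : Deriv Ax x.1 A) : A ∈ x.1 := by
  by_contra hA
  exact x.2.prop (.mp (x.deriv_bot_insert hA).deduction h)

theorem mem_of_bProv (h : BProv Ax A) : A ∈ x.1 :=
  x.mem_of_deriv (.thm h)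

theorem bot_not_mem : BForm.bot ∉ x.1 :=
  fun h => x.2.prop (.hyp h)

theorem imp_mem_iff : A.imp B ∈ x.1 ↔ (A ∈ x.1 → B ∈ x.1) := by
  refine ⟨fun hAB hA => x.mem_of_deriv (.mp (.hyp hAB) (.hyp hA)), fun h => ?_⟩
  by_cases hA : A ∈ x.1
  · exact x.mem_of_deriv (.mp (.thm BProv.pl1) (.hyp (h hA)))
  · exact x.mem_of_deriv (x.deriv_bot_insert hA).of_bot.deduction

theorem neg_mem_iff : A.neg ∈ x.1 ↔ A ∉ x.1 :=
  x.imp_mem_iff.trans (imp_congr_right fun _ => iff_false_intro x.bot_not_mem)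

theorem exists_not_mem (h : ¬ BProv Ax A) : ∃ x : MCS Ax, A ∉ x.1 := by
  have hcon : Consistent Ax (insert A.neg ∅) := fun hder => h hder.deduction.dne.bProv_of_empty
  obtain ⟨x, hx⟩ := exists_superset hcon
  exact ⟨x, x.neg_mem_iff.1 (hx (mem_insert _ _))⟩

def Rel (i : Fin 2) (x y : MCS Ax) : Prop := ∀ D, box i D ∈ x.1 → D ∈ y.1

theorem box_mem_iff : box i A ∈ x.1 ↔ ∀ y, Rel i x y → A ∈ y.1 := by
  refine ⟨fun h y hy => hy A h, fun h => ?_⟩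
  by_contra hbox
  have hcon : Consistent Ax (insert A.neg {D | box i D ∈ x.1}) := by
    intro hder
    refine hbox (x.mem_of_deriv ((hder.deduction.dne.box i).mono ?_))
    rintro _ ⟨D, hD, rfl⟩
    exact hD
  obtain ⟨y, hy⟩ := exists_superset hcon
  exact (y.neg_mem_iff.1 (hy (mem_insert _ _))) (h y fun D hD => hy (Or.inr hD))

theorem dia_mem_iff : dia i A ∈ x.1 ↔ ∃ y, Rel i x y ∧ A ∈ y.1 := by
  simp only [dia, neg_mem_iff, box_mem_iff, not_forall, exists_prop, not_not]

end MCS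

abbrev LAx : Set BForm := FusionAx ∪ {MKB}

theorem bProv_subst_toB0 {B : MForm} (hB : B ∈ S41L) (σ : ℕ → BForm) :
    BProv LAx ((MForm.toB 0 B).subst σ) :=
  .subst σ (.axm (Or.inl (Or.inl ⟨B, hB, rfl⟩)))

theorem bProv_subst_toB1 {B : MForm} (hB : B ∈ S4L) (σ : ℕ → BForm) :
    BProv LAx ((MForm.toB 1 B).subst σ) :=
  .subst σ (.axm (Or.inl (Or.inr ⟨B, hB, rfl⟩)))

theorem bProv_T (i : Fin 2) (A : BForm) : BProv LAx ((box i A).imp A) := by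
  match i with
  | 0 => exact bProv_subst_toB0 (B := (MForm.box pM).imp pM) (.axm (.inl (.inl rfl))) fun _ => A
  | 1 => exact bProv_subst_toB1 (B := (MForm.box pM).imp pM) (.axm (.inl rfl)) fun _ => A

theorem bProv_four (i : Fin 2) (A : BForm) :
    BProv LAx ((box i A).imp (box i (box i A))) := by
  match i with
  | 0 =>
    exact bProv_subst_toB0 (B := (MForm.box pM).imp (MForm.box (MForm.box pM)))
      (.axm (Or.inl (Or.inr rfl))) fun _ => A
  | 1 =>
    exact bProv_subst_toB1 (B := (MForm.box pM).imp (MForm.box (MForm.box pM)))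
      (.axm (Or.inr rfl)) fun _ => A

theorem bProv_McK (A : BForm) :
    BProv LAx ((box 0 (dia 0 A)).imp (dia 0 (box 0 A))) :=
  bProv_subst_toB0 (B := McKM) (.axm (Or.inr rfl)) fun _ => A

def BForm.collapse (D : BForm) : BForm := (dia 0 D).imp (box 0 D)

theorem bProv_MKB (A : BForm) : BProv LAx (dia 0 (box 1 A.collapse)) :=
  .subst (A := MKB) (fun _ => A) (.axm (Or.inr rfl))

def BForm.eraseBox0 : BForm → BForm
  | .var n => .var n
  | .bot => .bot
  | .imp A B => A.eraseBox0.imp B.eraseBox0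
  | .box 0 A => A.eraseBox0
  | .box 1 A => .box 1 A.eraseBox0

def BForm.subformulas : BForm → List BForm
  | .var n => [.var n]
  | .bot => [.bot]
  | .imp A B => .imp A B :: (A.subformulas ++ B.subformulas)
  | .box i A => .box i A :: A.subformulas

theorem BForm.mem_subformulas_self (C : BForm) : C ∈ C.subformulas := by
  cases C <;> simp [BForm.subformulas]

namespace MCS

variable {A : BForm} {i : Fin 2} (x : MCS LAx)

theorem mem_of_box_mem (h : box i A ∈ x.1) : A ∈ x.1 :=
  (x.imp_mem_iff.1 (x.mem_of_bProv (bProv_T i A))) h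

theorem Rel.refl (i : Fin 2) (x : MCS LAx) : Rel i x x :=
  fun _ => x.mem_of_box_mem

variable {x}

theorem box_mem_of_rel {y : MCS LAx} (hxy : Rel i x y) (h : box i A ∈ x.1) :
    box i A ∈ y.1 :=
  hxy _ ((x.imp_mem_iff.1 (x.mem_of_bProv (bProv_four i A))) h)

theorem Rel.trans {y z : MCS LAx} (hxy : Rel i x y) (hyz : Rel i y z) : Rel i x z :=
  fun _ hD => hyz _ (box_mem_of_rel hxy hD)

variable (x)

theorem exists_rel_box_or_box_neg (X : BForm) :
    ∃ y, Rel 0 x y ∧ (box 0 X ∈ y.1 ∨ box 0 X.neg ∈ y.1) := by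
  by_contra! h
  have hbdia : box 0 (dia 0 X) ∈ x.1 :=
    x.box_mem_iff.2 fun y hy => y.neg_mem_iff.2 (h y hy).2
  obtain ⟨y, hy, hyX⟩ := x.dia_mem_iff.1 (x.imp_mem_iff.1 (x.mem_of_bProv (bProv_McK X)) hbdia)
  exact (h y hy).1 hyX

theorem exists_rel_decides {S : Set BForm} (hS : S.Finite) :
    ∃ y, Rel 0 x y ∧ ∀ X ∈ S, box 0 X ∈ y.1 ∨ box 0 X.neg ∈ y.1 := by
  induction S, hS using Set.Finite.induction_on with
  | empty => exact ⟨x, Rel.refl 0 x, fun _ h => absurd h (notMem_empty _)⟩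
  | @insert X S _ _ ih =>
    obtain ⟨y, hxy, hy⟩ := ih
    obtain ⟨z, hyz, hz⟩ := y.exists_rel_box_or_box_neg X
    refine ⟨z, hxy.trans hyz, forall_mem_insert.2 ⟨hz, fun X' hX' => ?_⟩⟩
    exact (hy X' hX').imp (box_mem_of_rel hyz) (box_mem_of_rel hyz)

theorem exists_rel_collapsed {S : Set BForm} (hS : S.Finite) :
    ∃ y, Rel 0 x y ∧ ∀ D ∈ S, box 1 D.collapse ∈ y.1 := by
  obtain ⟨y, hxy, hy⟩ := x.exists_rel_decides (hS.image fun D => box 1 D.collapse)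
  refine ⟨y, hxy, fun D hD => ?_⟩
  have hMKB : dia 0 (box 1 D.collapse) ∈ y.1 := y.mem_of_bProv (bProv_MKB D)
  rcases hy _ (mem_image_of_mem _ hD) with h | h
  · exact y.mem_of_box_mem h
  · exact absurd h (y.neg_mem_iff.1 hMKB)

theorem mem_iff_eraseBox0_mem {C : BForm} {y : MCS LAx}
    (hy : ∀ D ∈ C.subformulas, box 1 D.collapse ∈ y.1) : C ∈ y.1 ↔ C.eraseBox0 ∈ y.1 := by
  induction C generalizing y with
  | var n => rfl
  | bot => rfl
  | imp A B ihA ihB =>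
    refine (y.imp_mem_iff.trans (imp_congr ?_ ?_)).trans y.imp_mem_iff.symm
    · exact ihA fun D hD => hy D (by simp [BForm.subformulas, hD])
    · exact ihB fun D hD => hy D (by simp [BForm.subformulas, hD])
  | box i C ih =>
    match i with
    | 0 =>
      rw [show (box 0 C).eraseBox0 = C.eraseBox0 from rfl,
        ← ih fun D hD => hy D (by simp [BForm.subformulas, hD])]
      refine ⟨y.mem_of_box_mem, fun hC => ?_⟩
      have hcoll : C.collapse ∈ y.1 :=
        y.mem_of_box_mem (hy C (List.mem_cons_of_mem _ C.mem_subformulas_self))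
      exact y.imp_mem_iff.1 hcoll (y.dia_mem_iff.2 ⟨y, Rel.refl 0 y, hC⟩)
    | 1 =>
      rw [show (box 1 C).eraseBox0 = box 1 C.eraseBox0 from rfl,
        y.box_mem_iff, y.box_mem_iff]
      refine forall₂_congr fun z hyz => ih fun D hD => box_mem_of_rel hyz (hy D ?_)
      simp [BForm.subformulas, hD]

def EraseWitness (x y : MCS LAx) : Prop := ∀ C, box 0 C ∈ x.1 → C.eraseBox0 ∈ y.1

theorem exists_eraseWitness : ∃ y, EraseWitness x y := by
  suffices Consistent LAx (BForm.eraseBox0 '' {C | box 0 C ∈ x.1}) by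
    obtain ⟨y, hy⟩ := exists_superset this
    exact ⟨y, fun C hC => hy (mem_image_of_mem _ hC)⟩
  intro hder
  obtain ⟨s, hs, hsf, hder⟩ := hder.exists_finite
  obtain ⟨t, ht, htf, hder⟩ :=
    exists_subset_image_finite_and (p := (Deriv LAx · .bot)).1 ⟨s, hs, hsf, hder⟩
  obtain ⟨y, hxy, hy⟩ := x.exists_rel_collapsed (htf.biUnion fun C _ => C.subformulas.finite_toSet)
  refine y.2.prop (hder.mono ?_)
  rintro _ ⟨C, hC, rfl⟩
  exact (mem_iff_eraseBox0_mem fun D hD => hy D (mem_biUnion hC hD)).1 (hxy C (ht hC))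

end MCS

-- `(x, false)` is the canonical point `x`, `(x, true)` its copy on which `R₁` is the identity.
def surgeryR₁ : MCS LAx × Bool → MCS LAx × Bool → Prop
  | (x, false), (y, false) => MCS.Rel 0 x y
  | (x, false), (y, true) => MCS.EraseWitness x y
  | (x, true), (y, true) => x = y
  | (_, true), (_, false) => False

def surgeryR₂ (p q : MCS LAx × Bool) : Prop := p.2 = q.2 ∧ MCS.Rel 1 p.1 q.1

def surgeryV (n : ℕ) (p : MCS LAx × Bool) : Prop := BForm.var n ∈ p.1.1

theorem surgeryR₁_true_iff {y : MCS LAx} {q : MCS LAx × Bool} :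
    surgeryR₁ (y, true) q ↔ q = (y, true) := by
  rcases q with ⟨z, _ | _⟩ <;> simp [surgeryR₁, eq_comm]

theorem forall_surgeryR₁_false_iff {x : MCS LAx} {P : MCS LAx × Bool → Prop} :
    (∀ q, surgeryR₁ (x, false) q → P q) ↔
      (∀ y, MCS.Rel 0 x y → P (y, false)) ∧ ∀ y, MCS.EraseWitness x y → P (y, true) :=
  ⟨fun h => ⟨fun y => h (y, false), fun y => h (y, true)⟩,
    fun h => fun ⟨y, b⟩ => match b with
      | false => h.1 y
      | true => h.2 y⟩

theorem forall_surgeryR₂_iff {x : MCS LAx} {b : Bool} {P : MCS LAx × Bool → Prop} :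
    (∀ q, surgeryR₂ (x, b) q → P q) ↔ ∀ y, MCS.Rel 1 x y → P (y, b) :=
  ⟨fun h y hy => h (y, b) ⟨rfl, hy⟩, fun h ⟨y, _⟩ ⟨hb, hy⟩ => by
    obtain rfl : b = _ := hb
    exact h y hy⟩

theorem isLFrame_surgery : IsLFrame ![surgeryR₁, surgeryR₂] := by
  refine ⟨fun i p => ?_, fun i p q r => ?_, fun p => ?_⟩
  · match i, p with
    | 0, (x, false) => exact MCS.Rel.refl 0 x
    | 0, (x, true) => exact rfl
    | 1, (x, _) => exact ⟨rfl, MCS.Rel.refl 1 x⟩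
  · match i, p, q, r with
    | 0, (_, false), (_, false), (_, false) => exact MCS.Rel.trans
    | 0, (_, false), (_, false), (_, true) =>
      exact fun hxy hyz C hC => hyz C (MCS.box_mem_of_rel hxy hC)
    | 0, (_, false), (_, true), (_, true) => exact fun hxy hyz => hyz ▸ hxy
    | 0, (_, true), (_, true), (_, true) => exact Eq.trans
    | 0, (_, false), (_, true), (_, false) => exact fun _ h => h.elim
    | 0, (_, true), (_, true), (_, false) => exact fun _ h => h.elim
    | 0, (_, true), (_, false), _ => exact fun h => h.elim
    | 1, _, _, _ => exact fun hpq hqr => ⟨hpq.1.trans hqr.1, hpq.2.trans hqr.2⟩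
  · have hfinal : ∀ y : MCS LAx, ∀ z, surgeryR₂ (y, true) z → ∀ u, surgeryR₁ z u → u = z := by
      rintro y ⟨z, b⟩ ⟨rfl, _⟩ u hu
      exact surgeryR₁_true_iff.1 hu
    rcases p with ⟨x, _ | _⟩
    · obtain ⟨y, hy⟩ := x.exists_eraseWitness
      exact ⟨(y, true), hy, hfinal y⟩
    · exact ⟨(x, true), rfl, hfinal x⟩

theorem bSat_surgery_true_iff (C : BForm) (y : MCS LAx) :
    BSat ![surgeryR₁, surgeryR₂] surgeryV (y, true) C ↔ C.eraseBox0 ∈ y.1 := by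
  induction C generalizing y with
  | var n => rfl
  | bot => exact iff_of_false id y.bot_not_mem
  | imp A B ihA ihB => exact (imp_congr (ihA y) (ihB y)).trans y.imp_mem_iff.symm
  | box i C ih =>
    match i with
    | 0 =>
      show (∀ q, surgeryR₁ (y, true) q → _) ↔ _
      simp only [surgeryR₁_true_iff, forall_eq]
      exact ih y
    | 1 =>
      show (∀ q, surgeryR₂ (y, true) q → _) ↔ _
      rw [forall_surgeryR₂_iff]
      exact (forall₂_congr fun z _ => ih z).trans y.box_mem_iff.symm

theorem bSat_surgery_false_iff (C : BForm) (x : MCS LAx) :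
    BSat ![surgeryR₁, surgeryR₂] surgeryV (x, false) C ↔ C ∈ x.1 := by
  induction C generalizing x with
  | var n => rfl
  | bot => exact iff_of_false id x.bot_not_mem
  | imp A B ihA ihB => exact (imp_congr (ihA x) (ihB x)).trans x.imp_mem_iff.symm
  | box i C ih =>
    match i with
    | 0 =>
      show (∀ q, surgeryR₁ (x, false) q → _) ↔ _
      simp only [forall_surgeryR₁_false_iff, ih, bSat_surgery_true_iff]
      exact ⟨fun h => x.box_mem_iff.2 h.1, fun h => ⟨x.box_mem_iff.1 h, fun y hy => hy C h⟩⟩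
    | 1 =>
      show (∀ q, surgeryR₂ (x, false) q → _) ↔ _
      rw [forall_surgeryR₂_iff]
      exact (forall₂_congr fun z _ => ih z).trans x.box_mem_iff.symm

/-- L = S4.1 ∗ S4 + ◇₁□₂(◇₁p → □₁p) is Kripke complete: it equals
the set of bimodal formulas valid in every Kripke 2-frame validating L. -/
theorem LL_kripke_complete :
    LL = {A : BForm | ∀ (W : Type) (R1 R2 : W → W → Prop), Nonempty W →
      (∀ B ∈ LL, BValid ![R1, R2] B) → BValid ![R1, R2] A} := by
  ext A
  refine ⟨fun hA _ _ _ _ hvalid => hvalid A hA, fun hA => ?_⟩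
  by_contra hnot
  obtain ⟨x, hx⟩ := MCS.exists_not_mem hnot
  have hvalid := hA _ surgeryR₁ surgeryR₂ ⟨(x, false)⟩
    fun _ => isLFrame_surgery.bValid_of_mem_LL
  exact hx ((bSat_surgery_false_iff A x).1 (hvalid surgeryV (x, false)))
end

section
/- For every finite rooted Kripke 2-frame F validating L = S4.1 ∗ S4 + ◇₁□₂(◇₁p → □₁p), there exists a p-morphism from the frame 𝕋_{2,2+2} onto F. -/
open Relation

theorem exists_pred_not_constant_on_Ici {α : Type*} [Preorder α] [WellFoundedGT α] :
    ∃ P : α → Prop, ∀ z w, z ≤ w → w ≠ z → (∃ v, z ≤ v ∧ P v) ∧ ∃ v, z ≤ v ∧ ¬ P v := by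
  let rep : α → α := fun z => ofAntisymmetrization (· ≤ ·) (toAntisymmetrization (· ≤ ·) z)
  have to_rep (z : α) : toAntisymmetrization (· ≤ ·) (rep z) = toAntisymmetrization (· ≤ ·) z :=
    toAntisymmetrization_ofAntisymmetrization _ _
  have le_rep (z : α) : z ≤ rep z :=
    toAntisymmetrization_le_toAntisymmetrization_iff.mp (to_rep z).ge
  have rep_eq {z w : α} (hzw : z ≤ w) (hwz : w ≤ z) : rep z = rep w :=
    congrArg (ofAntisymmetrization (· ≤ ·)) <| le_antisymm (α := Antisymmetrization α (· ≤ ·))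
      (toAntisymmetrization_le_toAntisymmetrization_iff.mpr hzw)
      (toAntisymmetrization_le_toAntisymmetrization_iff.mpr hwz)
  -- a kernel of `<` among the cluster representatives
  obtain ⟨P, hP⟩ : ∃ P : α → Prop, ∀ z, P z ↔ rep z = z ∧ ∀ w, z < w → ¬ P w :=
    ⟨wellFounded_gt.fix fun z ih => rep z = z ∧ ∀ w (h : z < w), ¬ ih w h,
      fun z => by rw [WellFounded.fix_eq]⟩
  have exists_above (z : α) : ∃ v, z ≤ v ∧ P v := by
    by_cases hc : P (rep z)
    · exact ⟨rep z, le_rep z, hc⟩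
    · have hrep : rep (rep z) = rep z := congrArg (ofAntisymmetrization (· ≤ ·)) (to_rep z)
      obtain ⟨v, hv, hPv⟩ : ∃ v, rep z < v ∧ P v := by
        simpa [hP (rep z), hrep] using hc
      exact ⟨v, (le_rep z).trans hv.le, hPv⟩
  refine ⟨P, fun z w hzw hwz => ⟨exists_above z, ?_⟩⟩
  by_cases hwz' : w ≤ z
  · by_cases hz : rep z = z
    · refine ⟨w, hzw, fun hPw => hwz ?_⟩
      rw [← ((hP w).mp hPw).1, ← rep_eq hzw hwz', hz]
    · exact ⟨z, le_rfl, fun hPz => hz ((hP z).mp hPz).1⟩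
  · by_cases hPz : P z
    · exact ⟨w, hzw, ((hP z).mp hPz).2 w (lt_of_le_not_ge hzw hwz')⟩
    · exact ⟨z, le_rfl, hPz⟩

theorem toB_mem_LL_of_mem_S4Ax {A : MForm} (hA : A ∈ S4Ax) (i : Fin 2) : A.toB i ∈ LL := by
  refine BProv.axm (Or.inl ?_)
  fin_cases i
  · exact Or.inl ⟨A, MProv.axm (Or.inl hA), rfl⟩
  · exact Or.inr ⟨A, MProv.axm hA, rfl⟩

theorem MKB_mem_LL : MKB ∈ LL := BProv.axm (Or.inr rfl)

theorem isPreorder_of_BValid_S4Ax {W : Type} {R : Fin 2 → W → W → Prop} {i : Fin 2}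
    (h : ∀ A ∈ S4Ax, BValid R (A.toB i)) : IsPreorder W (R i) where
  refl x := h _ (Or.inl rfl) (fun _ => R i x) x fun _ => id
  trans x y z hxy hyz := h _ (Or.inr rfl) (fun _ => R i x) x (fun _ => id) y hxy z hyz

theorem exists_rel_zero_forall_rel_one_rel_zero_eq_of_BValid_MKB {W : Type} [Finite W]
    {R : Fin 2 → W → W → Prop} [IsPreorder W (R 0)] (h : BValid R MKB) (x : W) :
    ∃ y, R 0 x y ∧ ∀ z, R 1 y z → ∀ w, R 0 z w → w = z := by
  let _ : Preorder W :=
    { le := R 0, le_refl := refl_of (R 0), le_trans := fun _ _ _ => trans_of (R 0) }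
  obtain ⟨P, hP⟩ := exists_pred_not_constant_on_Ici (α := W)
  by_contra! hx
  refine h (fun _ => P) x fun y hxy hy => ?_
  obtain ⟨z, hyz, w, hzw, hwz⟩ := hx y hxy
  obtain ⟨⟨v₁, hzv₁, hv₁⟩, v₂, hzv₂, hv₂⟩ := hP z w hzw hwz
  exact hv₂ (hy z hyz (fun hnot => hnot v₁ hzv₁ hv₁) v₂ hzv₂)

theorem exists_seq_frequently_eq (U : Type*) [Nonempty U] [Countable U] :
    ∃ e : ℕ → U, ∀ v m, ∃ k, m ≤ k ∧ e k = v := by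
  obtain ⟨s, hs⟩ := exists_surjective_nat U
  refine ⟨fun k => s k.unpair.1, fun v m => ?_⟩
  obtain ⟨j, rfl⟩ := hs v
  exact ⟨Nat.pair j m, Nat.right_le_pair j m, by simp⟩

section Counter

variable {U : Type} (S : U → U → Prop) (e : ℕ → U)

open Classical in
noncomputable def counterStep (s : U × ℕ) (i : Fin 2) : U × ℕ :=
  if i = 0 then (s.1, s.2 + 1) else if S s.1 (e s.2) then (e s.2, 0) else (s.1, 0)

noncomputable def counterRun (s : U × ℕ) (w : List (Fin 2)) : U × ℕ :=
  w.foldl (counterStep S e) s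

theorem counterRun_append (s : U × ℕ) (w w' : List (Fin 2)) :
    counterRun S e s (w ++ w') = counterRun S e (counterRun S e s w) w' :=
  List.foldl_append

theorem rel_counterRun [IsPreorder U S] (s : U × ℕ) (w : List (Fin 2)) :
    S s.1 (counterRun S e s w).1 := by
  induction w generalizing s with
  | nil => exact refl_of S _
  | cons i w ih =>
    refine trans_of S ?_ (ih (counterStep S e s i))
    unfold counterStep
    split_ifs with _ h
    exacts [refl_of S _, h, refl_of S _]

theorem counterRun_replicate_zero (s : U × ℕ) (j : ℕ) :
    counterRun S e s (List.replicate j 0) = (s.1, s.2 + j) := by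
  induction j generalizing s with
  | zero => rfl
  | succ j ih =>
    rw [List.replicate_succ, counterRun, List.foldl_cons, ← counterRun, ih]
    simp only [counterStep, ↓reduceIte, Prod.mk.injEq, true_and]
    omega

variable {S e} in
theorem exists_counterRun_eq (he : ∀ v m, ∃ k, m ≤ k ∧ e k = v) (s : U × ℕ) {v : U}
    (hv : S s.1 v) : ∃ w, counterRun S e s w = (v, 0) := by
  obtain ⟨k, hk, rfl⟩ := he v s.2
  refine ⟨List.replicate (k - s.2) 0 ++ [1], ?_⟩
  rw [counterRun_append, counterRun_replicate_zero, Nat.add_sub_cancel' hk]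
  simp [counterRun, counterStep, hv]

end Counter

theorem exists_append_of_forall_fst_eq_iff {α β : Type*} (b : α) (a a' : List (α × β)) :
    (∃ c, (∀ l ∈ c, l.1 = b) ∧ a' = a ++ c) ↔ ∃ w : List β, a' = a ++ w.map (Prod.mk b) := by
  refine ⟨fun ⟨c, hc, h⟩ => ⟨c.map Prod.snd, h.trans ?_⟩, fun ⟨w, h⟩ => ⟨_, by simp, h⟩⟩
  rw [List.map_map]
  conv_lhs => rw [← List.map_id c]
  exact congrArg (a ++ ·) (List.map_congr_left fun l hl => Prod.ext (hc l hl) rfl)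

theorem R1T_iff {a a' : T22} : R1T a a' ↔ ∃ w : List (Fin 2), a' = a ++ w.map (Prod.mk false) :=
  exists_append_of_forall_fst_eq_iff false a a'

theorem R2T_iff {a a' : T22} : R2T a a' ↔ ∃ w : List (Fin 2), a' = a ++ w.map (Prod.mk true) :=
  exists_append_of_forall_fst_eq_iff true a a'

section Tree

variable {U : Type} (S1 S2 : U → U → Prop) (e : ℕ → U)

noncomputable def letterRun (s : U × ℕ) (a : T22) : U × ℕ :=
  a.foldl (fun s l => counterStep (cond l.1 S2 S1) e s l.2) s

theorem letterRun_append_map (s : U × ℕ) (a : T22) (b : Bool) (w : List (Fin 2)) :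
    letterRun S1 S2 e s (a ++ w.map (Prod.mk b)) =
      counterRun (cond b S2 S1) e (letterRun S1 S2 e s a) w := by
  simp only [letterRun, counterRun, List.foldl_append, List.foldl_map]

noncomputable def treeMap (r : U) (y : U → U) : W222 → U
  | (a, none) => (letterRun S1 S2 e (r, 0) a).1
  | (a, some b) => (counterRun S2 e (y (letterRun S1 S2 e (r, 0) a).1, 0) b).1

variable {S1 S2} (r : U) (y : U → U)

theorem treeMap_rel_of_R1'gen [IsPreorder U S1] (hy : ∀ x, S1 x (y x)) {p q : W222}
    (h : R1'gen p q) :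
    S1 (treeMap S1 S2 e r y p) (treeMap S1 S2 e r y q) := by
  rcases h with ⟨a, a', ha, rfl, rfl⟩ | ⟨a, rfl, rfl⟩
  · obtain ⟨w, rfl⟩ := R1T_iff.mp ha
    simp only [treeMap, letterRun_append_map]
    exact rel_counterRun S1 e _ w
  · exact hy _

theorem treeMap_rel_of_R2'gen [IsPreorder U S2] {p q : W222} (h : R2'gen p q) :
    S2 (treeMap S1 S2 e r y p) (treeMap S1 S2 e r y q) := by
  rcases h with ⟨a, a', ha, rfl, rfl⟩ | ⟨a, b, b', ⟨w, rfl⟩, rfl, rfl⟩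
  · obtain ⟨w, rfl⟩ := R2T_iff.mp ha
    simp only [treeMap, letterRun_append_map]
    exact rel_counterRun S2 e _ w
  · simp only [treeMap, counterRun_append]
    exact rel_counterRun S2 e _ w

variable {e}

theorem exists_R1'_treeMap_eq [IsPreorder U S2] (he : ∀ v m, ∃ k, m ≤ k ∧ e k = v)
    (hy : ∀ x z, S2 (y x) z → ∀ w, S1 z w → w = z) (p : W222) {u : U}
    (hu : S1 (treeMap S1 S2 e r y p) u) : ∃ q, R1' p q ∧ treeMap S1 S2 e r y q = u := by
  obtain ⟨a, _ | b⟩ := p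
  · obtain ⟨w, hw⟩ := exists_counterRun_eq he _ hu
    refine ⟨(a ++ w.map (Prod.mk false), none),
      .single (.inl ⟨a, _, R1T_iff.mpr ⟨w, rfl⟩, rfl, rfl⟩), ?_⟩
    simp only [treeMap, letterRun_append_map, cond_false, hw]
  · exact ⟨_, .refl, (hy _ _ (rel_counterRun S2 e (_, 0) b) u hu).symm⟩

theorem exists_R2'_treeMap_eq (he : ∀ v m, ∃ k, m ≤ k ∧ e k = v) (p : W222) {u : U}
    (hu : S2 (treeMap S1 S2 e r y p) u) : ∃ q, R2' p q ∧ treeMap S1 S2 e r y q = u := by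
  obtain ⟨a, _ | b⟩ := p
  · obtain ⟨w, hw⟩ := exists_counterRun_eq he _ hu
    refine ⟨(a ++ w.map (Prod.mk true), none),
      .single (.inl ⟨a, _, R2T_iff.mpr ⟨w, rfl⟩, rfl, rfl⟩), ?_⟩
    simp only [treeMap, letterRun_append_map, cond_true, hw]
  · obtain ⟨w, hw⟩ := exists_counterRun_eq he _ hu
    refine ⟨(a, some (b ++ w)), .single (.inr ⟨a, b, _, ⟨w, rfl⟩, rfl, rfl⟩), ?_⟩
    simp only [treeMap, counterRun_append, hw]

end Tree

theorem isPMorphism2_reflTransGen {W U : Type} {G1 G2 : W → W → Prop} {S1 S2 : U → U → Prop}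
    [IsPreorder U S1] [IsPreorder U S2] (f : W → U)
    (forth1 : ∀ x y, G1 x y → S1 (f x) (f y))
    (back1 : ∀ x u, S1 (f x) u → ∃ y, ReflTransGen G1 x y ∧ f y = u)
    (forth2 : ∀ x y, G2 x y → S2 (f x) (f y))
    (back2 : ∀ x u, S2 (f x) u → ∃ y, ReflTransGen G2 x y ∧ f y = u)
    (x₀ : W) (hroot : ∀ u, ReflTransGen (fun a b => S1 a b ∨ S2 a b) (f x₀) u) :
    IsPMorphism2 (ReflTransGen G1) (ReflTransGen G2) S1 S2 f := by
  refine ⟨fun u => ?_, fun x y h => ?_, back1, fun x y h => ?_, back2⟩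
  · induction hroot u with
    | refl => exact ⟨x₀, rfl⟩
    | tail _ hstep ih =>
      obtain ⟨x, rfl⟩ := ih
      rcases hstep with h | h
      · exact (back1 x _ h).imp fun _ => And.right
      · exact (back2 x _ h).imp fun _ => And.right
  · simpa only [reflTransGen_eq_self] using ReflTransGen.lift f forth1 x y h
  · simpa only [reflTransGen_eq_self] using ReflTransGen.lift f forth2 x y h

theorem exists_isPMorphism2_T222 {U : Type} [Countable U] {S1 S2 : U → U → Prop}
    [IsPreorder U S1] [IsPreorder U S2] (r : U)
    (hr : ∀ u, ReflTransGen (fun a b => S1 a b ∨ S2 a b) r u)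
    (hS : ∀ x, ∃ y, S1 x y ∧ ∀ z, S2 y z → ∀ w, S1 z w → w = z) :
    ∃ f : W222 → U, IsPMorphism2 R1' R2' S1 S2 f := by
  have : Nonempty U := ⟨r⟩
  obtain ⟨e, he⟩ := exists_seq_frequently_eq U
  choose y hy hyS using hS
  exact ⟨treeMap S1 S2 e r y, isPMorphism2_reflTransGen _
    (fun _ _ => treeMap_rel_of_R1'gen e r y hy) (exists_R1'_treeMap_eq r y he hyS)
    (fun _ _ => treeMap_rel_of_R2'gen e r y) (exists_R2'_treeMap_eq r y he) ([], none) hr⟩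

/-- for every finite rooted Kripke 2-frame validating L there is a
p-morphism from 𝕋₂,₂₊₂ onto it. -/
theorem T222_pmorphism_onto_finite_rooted :
    ∀ (U : Type) (S1 S2 : U → U → Prop), Nonempty U → Finite U →
      (∃ r : U, ∀ x : U, Relation.ReflTransGen (fun a b => S1 a b ∨ S2 a b) r x) →
      (∀ A ∈ LL, BValid ![S1, S2] A) →
      ∃ f : W222 → U, IsPMorphism2 R1' R2' S1 S2 f := by
  intro U S1 S2 _ _ ⟨r, hr⟩ hval
  have h0 : IsPreorder U S1 :=
    isPreorder_of_BValid_S4Ax (i := 0) fun A hA => hval _ (toB_mem_LL_of_mem_S4Ax hA 0)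
  have h1 : IsPreorder U S2 :=
    isPreorder_of_BValid_S4Ax (i := 1) fun A hA => hval _ (toB_mem_LL_of_mem_S4Ax hA 1)
  have : IsPreorder U (![S1, S2] 0) := h0
  exact exists_isPMorphism2_T222 r hr
    (exists_rel_zero_forall_rel_one_rel_zero_eq_of_BValid_MKB (hval _ MKB_mem_LL))
end

section
/- If 𝔛₁ and 𝔛₂ are topological spaces and 𝔛₁ is weakly scattered, then the bitopological product 𝔛₁ × 𝔛₂ validates the bimodal formula ◇₁□₂(◇₁p → □₁p). -/
/-!
The horizontal slice through `(x, y)` of a horizontally open set is open in `𝔛₁`, so by weak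
scatteredness it contains an isolated point `x₀`. Every point of the column `{x₀} × Y`, a vertical
neighbourhood of `(x₀, y)`, is then horizontally isolated, and at a point isolated for `□₁` both
`◇₁A` and `□₁A` are equivalent to `A`.
-/

open Topology

lemma continuous_horiz_mk_left {X Y : Type} (t : TopologicalSpace X) (y : Y) :
    Continuous[t, horiz t] (fun x : X => (x, y)) := by
  refine continuous_generateFrom_iff.2 ?_
  rintro _ ⟨U, y', hU, rfl⟩
  by_cases hy : y = y'
  · subst hy
    have hpre : (fun x : X => (x, y)) ⁻¹' (U ×ˢ {y}) = U := by ext; simp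
    rwa [hpre]
  · simp [Set.preimage, Set.mem_prod, hy]

lemma isOpen_horiz_singleton {X Y : Type} {t : TopologicalSpace X} {x : X}
    (hx : IsOpen[t] {x}) (y : Y) : IsOpen[horiz t] {(x, y)} := by
  rw [← Set.singleton_prod_singleton]
  exact TopologicalSpace.GenerateOpen.basic _ ⟨{x}, y, hx, rfl⟩

lemma isOpen_vert_singleton_prod {X Y : Type} {t : TopologicalSpace Y} {U : Set Y}
    (hU : IsOpen[t] U) (x : X) : IsOpen[vert t] ({x} ×ˢ U) :=
  TopologicalSpace.GenerateOpen.basic _ ⟨x, U, hU, rfl⟩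

section BTSat

variable {W : Type} {t : Fin 2 → TopologicalSpace W} {V : ℕ → W → Prop} {i : Fin 2} {A : BForm}
  {w : W}

lemma BTSat_dia_iff :
    BTSat t V w (BForm.dia i A) ↔ ∀ U, IsOpen[t i] U → w ∈ U → ∃ y ∈ U, BTSat t V y A := by
  simp only [BForm.dia, BForm.neg, BTSat, imp_false, not_exists, not_and, not_forall, not_not,
    exists_prop]
  rfl

lemma BTSat_box_of_dia_of_isOpen_singleton (hw : IsOpen[t i] {w})
    (h : BTSat t V w (BForm.dia i A)) : BTSat t V w (BForm.box i A) := by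
  obtain ⟨y, rfl, hy⟩ := BTSat_dia_iff.1 h {w} hw rfl
  exact ⟨{y}, hw, rfl, fun _ hz => hz ▸ hy⟩

end BTSat

/-- if 𝔛₁ is weakly scattered then the bitopological product
𝔛₁ × 𝔛₂ validates ◇₁□₂(◇₁p → □₁p). -/
theorem weaklyScattered_product_validates_MKB :
    ∀ (X Y : Type) (t1 : TopologicalSpace X) (t2 : TopologicalSpace Y),
      Nonempty X → Nonempty Y → WeaklyScattered t1 →
      BTValid ![horiz t1, vert t2] MKB := by
  intro X Y t1 t2 _ _ hX V z
  refine BTSat_dia_iff.2 fun U hU hzU => ?_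
  have hslice : IsOpen[t1] ((·, z.2) ⁻¹' U) :=
    continuous_def.1 (continuous_horiz_mk_left t1 z.2) U hU
  obtain ⟨x₀, hx₀U, hx₀⟩ := hX _ hslice ⟨z.1, hzU⟩
  refine ⟨(x₀, z.2), hx₀U, {x₀} ×ˢ Set.univ, isOpen_vert_singleton_prod isOpen_univ x₀,
    ⟨rfl, trivial⟩, ?_⟩
  rintro ⟨x, y⟩ ⟨rfl, -⟩
  exact BTSat_box_of_dia_of_isOpen_singleton (isOpen_horiz_singleton hx₀ y)
end
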